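/- Let B be a skew brace. Then for every positive integer n, Γ_[n](B) is an ideal of B, and Γ_[n+1](B) ⊆ Γ_[n](B). -/
import Mathlib


/-- A skew brace: a type with two group structures `(B,+)` and `(B,∘)`
(the multiplicative group is written with `*`) sharing the same underlying set,
such that `a ∘ (b + c) = a ∘ b - a + a ∘ c`. -/
class SkewBrace (B : Type*) extends AddGroup B, Group B where
  circ_add : ∀ a b c : B, a * (b + c) = a * b - a + a * c

namespace SkewBrace

variable {B : Type*} [SkewBrace B]

/-- `lam a b = -a + a ∘ b`, i.e. `λ_a(b)`. -/
def lam (a b : B) : B := -a + a * b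

/-- `a * b` (the star operation) `= λ_a(b) - b = -a + a ∘ b - b`. -/
def starOp (a b : B) : B := -a + a * b - b

/-- `X * Y` : the additive subgroup generated by all `x * y`, `x ∈ X`, `y ∈ Y`,
regarded as a set. -/
def starSpan (X Y : Set B) : Set B :=
  (AddSubgroup.closure {z : B | ∃ x ∈ X, ∃ y ∈ Y, z = starOp x y} : AddSubgroup B)

/-- `[X,Y]₊` : the additive subgroup generated by all additive commutators
`x + y - x - y`, `x ∈ X`, `y ∈ Y`, regarded as a set. -/
def addCommSpan (X Y : Set B) : Set B :=
  (AddSubgroup.closure {z : B | ∃ x ∈ X, ∃ y ∈ Y, z = x + y - x - y} : AddSubgroup B)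

/-- A sub skew brace: a subset containing `0` and closed under both group
operations and both inverses. -/
def IsSubSkewBrace (S : Set B) : Prop :=
  0 ∈ S ∧ (∀ a ∈ S, ∀ b ∈ S, a + b ∈ S) ∧ (∀ a ∈ S, -a ∈ S) ∧
    (∀ a ∈ S, ∀ b ∈ S, a * b ∈ S) ∧ (∀ a ∈ S, a⁻¹ ∈ S)

/-- An ideal: a sub skew brace that is normal in `(B,+)` and in `(B,∘)` and
invariant under all `λ_a`. -/
def IsIdeal (S : Set B) : Prop :=
  IsSubSkewBrace S ∧ (∀ a : B, ∀ i ∈ S, a + i - a ∈ S) ∧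
    (∀ a : B, ∀ i ∈ S, a * i * a⁻¹ ∈ S) ∧ (∀ a : B, ∀ i ∈ S, lam a i ∈ S)

/-- The annihilator `Ann(B) = {x | x∘a = a∘x = x+a = a+x for all a}`. -/
def annSet (B : Type*) [SkewBrace B] : Set B :=
  {x | ∀ a : B, x * a = a * x ∧ x * a = x + a ∧ x + a = a + x}

/-- The annihilator series: `Ann₀(B) = 0` and `Ann_{n+1}(B)` is the preimage of
`Ann(B/Annₙ(B))` under the quotient map; membership is expressed via coset
equalities modulo `Annₙ(B)`. -/
def annSeries (B : Type*) [SkewBrace B] : ℕ → Set B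
  | 0 => {0}
  | n + 1 => {x | ∀ a : B,
      x * a - a * x ∈ annSeries B n ∧
      x * a - (x + a) ∈ annSeries B n ∧
      (x + a) - (a + x) ∈ annSeries B n}

/-- `B` is annihilator nilpotent if `Annₙ(B) = B` for some `n`. -/
def AnnNilpotent (B : Type*) [SkewBrace B] : Prop :=
  ∃ n : ℕ, annSeries B n = Set.univ

/-- `leftPow B n` is `B^{n+1}`: `B¹ = B`, `B^{n+1} = B * Bⁿ`. -/
def leftPow (B : Type*) [SkewBrace B] : ℕ → Set B
  | 0 => Set.univ
  | n + 1 => starSpan Set.univ (leftPow B n)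

/-- `rightPow B n` is `B⁽ⁿ⁺¹⁾`: `B⁽¹⁾ = B`, `B⁽ⁿ⁺¹⁾ = B⁽ⁿ⁾ * B`. -/
def rightPow (B : Type*) [SkewBrace B] : ℕ → Set B
  | 0 => Set.univ
  | n + 1 => starSpan (rightPow B n) Set.univ

/-- `B` is left nilpotent if `Bⁿ = 0` for some `n ≥ 1`. -/
def LeftNilpotent (B : Type*) [SkewBrace B] : Prop :=
  ∃ n : ℕ, leftPow B n = ({0} : Set B)

/-- `B` is right nilpotent if `B⁽ⁿ⁾ = 0` for some `n ≥ 1`. -/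
def RightNilpotent (B : Type*) [SkewBrace B] : Prop :=
  ∃ n : ℕ, rightPow B n = ({0} : Set B)

/-- `strongPow B n` is `B^[n+1]`: `B^[1] = B`, and `B^[n+1]` is the additive
subgroup generated by `⋃_{i=1}^{n} B^[i] * B^[n+1-i]`. -/
def strongPow (B : Type*) [SkewBrace B] : ℕ → Set B
  | 0 => Set.univ
  | n + 1 => (AddSubgroup.closure (⋃ j : Fin (n + 1),
      {z : B | ∃ x ∈ strongPow B j.1, ∃ y ∈ strongPow B (n - j.1), z = starOp x y}) :
        AddSubgroup B)
  decreasing_by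
  · exact j.isLt
  · omega

/-- `B` is strongly nilpotent if `B^[n] = 0` for some `n ≥ 1`. -/
def StronglyNilpotent (B : Type*) [SkewBrace B] : Prop :=
  ∃ n : ℕ, strongPow B n = ({0} : Set B)

/-- `gammaAux B n` is `Γ_[n+1](B)`: `Γ_[1](B) = B` and, for `n ≥ 2`, `Γ_[n](B)` is
the additive subgroup generated by the sets `Γ_[i](B) * Γ_[n-i](B)` and
`[Γ_[i](B), Γ_[n-i](B)]₊` for `1 ≤ i ≤ n-1`. -/
def gammaAux (B : Type*) [SkewBrace B] : ℕ → Set B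
  | 0 => Set.univ
  | n + 1 => (AddSubgroup.closure (⋃ j : Fin (n + 1),
      {z : B | ∃ x ∈ gammaAux B j.1, ∃ y ∈ gammaAux B (n - j.1),
        z = starOp x y ∨ z = x + y - x - y}) : AddSubgroup B)
  decreasing_by
  · exact j.isLt
  · omega

/-- `Γ_[n](B)` for `n ≥ 1` (one-based indexing as in the paper). -/
def gammaBr (B : Type*) [SkewBrace B] (n : ℕ) : Set B := gammaAux B (n - 1)

/-- `B` is finitely generated as a skew brace: there is a finite subset whose
smallest containing sub skew brace is `B` itself. -/
def SBFinitelyGenerated (B : Type*) [SkewBrace B] : Prop :=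
  ∃ S : Set B, S.Finite ∧ ∀ T : Set B, IsSubSkewBrace T → S ⊆ T → T = Set.univ

/-- `B` satisfies the ascending chain condition on sub skew braces. -/
def ACCSubSkewBrace (B : Type*) [SkewBrace B] : Prop :=
  ∀ f : ℕ → Set B, (∀ n, IsSubSkewBrace (f n)) → (∀ n, f n ⊆ f (n + 1)) →
    ∃ N : ℕ, ∀ n, N ≤ n → f n = f N



lemma zero_eq_one : (0:B) = 1 := by
  have h := circ_add (1:B) 0 0
  simp only [add_zero, one_mul] at h
  rw [zero_sub, eq_comm, neg_eq_zero] at h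
  exact h.symm

lemma mul_zero' (a : B) : a * (0:B) = a := by
  rw [zero_eq_one, mul_one]

lemma lam_add (a b c : B) : lam a (b + c) = lam a b + lam a c := by
  simp only [lam, circ_add, sub_eq_add_neg, add_assoc]

lemma lam_zero' (a : B) : lam a 0 = 0 := by simp [lam, mul_zero']

lemma lam_neg (a b : B) : lam a (-b) = -(lam a b) := by
  have h : lam a (-b) + lam a b = 0 := by rw [← lam_add]; simp [lam_zero']
  exact eq_neg_of_add_eq_zero_left h

lemma mul_eq_lam (a b : B) : a * b = a + lam a b := by
  simp [lam, ← add_assoc]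

lemma lam_inv (a : B) : lam a a⁻¹ = -a := by
  simp [lam, ← zero_eq_one]

lemma lam_mul (a b c : B) : lam (a * b) c = lam a (lam b c) := by
  have hneg : a * (-b) = a - a * b + a := by
    have h2 := lam_neg a b
    simp only [lam] at h2
    rw [neg_add_rev, neg_neg] at h2
    have h3 := congrArg (a + ·) h2
    simpa [← add_assoc, sub_eq_add_neg] using h3
  simp only [lam, circ_add, hneg, sub_eq_add_neg, mul_assoc, add_assoc]
  simp [neg_add_cancel_left, add_neg_cancel_left, ← add_assoc]

lemma lam_eq_star (a b : B) : lam a b = starOp a b + b := by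
  simp [starOp, lam, sub_eq_add_neg, add_assoc]

lemma inv_eq_star (a : B) : a⁻¹ = -(starOp a a⁻¹) - a := by
  have h : starOp a a⁻¹ = -a - a⁻¹ := by
    simp [starOp, lam_inv, lam, ← zero_eq_one, sub_eq_add_neg]
  rw [h]
  simp [sub_eq_add_neg, add_assoc]

lemma conj_eq_star (a i : B) :
    a * i * a⁻¹ = a + (lam a i + lam a (starOp i a⁻¹)) - a := by
  rw [mul_eq_lam (a*i) a⁻¹, lam_mul, mul_eq_lam a i]
  have h : lam i a⁻¹ = starOp i a⁻¹ + a⁻¹ := lam_eq_star i a⁻¹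
  rw [h, lam_add, lam_inv]
  simp [sub_eq_add_neg, add_assoc]

lemma gammaAux_succ (n : ℕ) : gammaAux B (n+1) = (AddSubgroup.closure (⋃ j : Fin (n + 1),
      {z : B | ∃ x ∈ gammaAux B j.1, ∃ y ∈ gammaAux B (n - j.1),
        z = starOp x y ∨ z = x + y - x - y}) : AddSubgroup B) := by
  rw [gammaAux]

lemma gammaAux_zero : gammaAux B 0 = Set.univ := by rw [gammaAux]

lemma star_gen_mem {k j : ℕ} (hj : j ≤ k) {x y : B}
    (hx : x ∈ gammaAux B j) (hy : y ∈ gammaAux B (k - j)) :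
    starOp x y ∈ gammaAux B (k+1) := by
  rw [gammaAux_succ]
  apply AddSubgroup.subset_closure
  exact Set.mem_iUnion.mpr ⟨⟨j, Nat.lt_succ_of_le hj⟩, x, hx, y, hy, Or.inl rfl⟩

lemma comm_gen_mem {k j : ℕ} (hj : j ≤ k) {x y : B}
    (hx : x ∈ gammaAux B j) (hy : y ∈ gammaAux B (k - j)) :
    x + y - x - y ∈ gammaAux B (k+1) := by
  rw [gammaAux_succ]
  apply AddSubgroup.subset_closure
  exact Set.mem_iUnion.mpr ⟨⟨j, Nat.lt_succ_of_le hj⟩, x, hx, y, hy, Or.inr rfl⟩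

lemma gammaAux_succ_subset : ∀ m, gammaAux B (m+1) ⊆ gammaAux B m := by
  intro m
  induction m using Nat.strong_induction_on with
  | _ m ih =>
    match m with
    | 0 => intro x _; rw [gammaAux_zero]; trivial
    | k+1 =>
      rw [gammaAux_succ (k+1), gammaAux_succ k]
      refine SetLike.coe_subset_coe.mpr (AddSubgroup.closure_le _ |>.mpr ?_)
      intro z hz
      obtain ⟨j, x, hx, y, hy, hz⟩ := Set.mem_iUnion.mp hz
      rcases Nat.lt_succ_iff_lt_or_eq.mp j.isLt with hcase | hcase
      · have hjk : j.1 ≤ k := Nat.lt_succ_iff.mp hcase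
        have hy' : y ∈ gammaAux B ((k - j.1) + 1) := by
          rwa [show k - j.1 + 1 = k + 1 - j.1 by omega]
        have hy2 : y ∈ gammaAux B (k - j.1) := ih (k - j.1) (by omega) hy'
        exact AddSubgroup.subset_closure
          (Set.mem_iUnion.mpr ⟨⟨j.1, by omega⟩, x, hx, y, hy2, hz⟩)
      · have hx' : x ∈ gammaAux B (k+1) := by rwa [hcase] at hx
        have hx2 : x ∈ gammaAux B k := ih k (by omega) hx'
        have hy2 : y ∈ gammaAux B (k - k) := by
          rw [Nat.sub_self, gammaAux_zero]; trivial
        exact AddSubgroup.subset_closure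
          (Set.mem_iUnion.mpr ⟨⟨k, by omega⟩, x, hx2, y, hy2, hz⟩)

lemma gammaAux_antitone {m n : ℕ} (h : m ≤ n) : gammaAux B n ⊆ gammaAux B m := by
  induction h with
  | refl => exact subset_rfl
  | step _ ih => exact fun x hx => (ih (gammaAux_succ_subset _ hx))

lemma gamma_zero_mem (m : ℕ) : (0:B) ∈ gammaAux B m := by
  match m with
  | 0 => rw [gammaAux_zero]; trivial
  | k+1 => rw [gammaAux_succ]; exact AddSubgroup.zero_mem _

lemma gamma_add_mem {m : ℕ} {a b : B} (ha : a ∈ gammaAux B m) (hb : b ∈ gammaAux B m) :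
    a + b ∈ gammaAux B m := by
  match m with
  | 0 => rw [gammaAux_zero]; trivial
  | k+1 =>
    rw [gammaAux_succ] at *
    exact AddSubgroup.add_mem _ ha hb

lemma gamma_neg_mem {m : ℕ} {a : B} (ha : a ∈ gammaAux B m) : -a ∈ gammaAux B m := by
  match m with
  | 0 => rw [gammaAux_zero]; trivial
  | k+1 =>
    rw [gammaAux_succ] at *
    exact AddSubgroup.neg_mem _ ha

lemma gamma_star_left {m : ℕ} (x : B) {y : B} (hy : y ∈ gammaAux B m) :
    starOp x y ∈ gammaAux B m := by
  apply gammaAux_succ_subset m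
  apply star_gen_mem (Nat.zero_le m) (by rw [gammaAux_zero]; trivial)
  simpa using hy

lemma gamma_star_right {m : ℕ} {x : B} (hx : x ∈ gammaAux B m) (y : B) :
    starOp x y ∈ gammaAux B m := by
  apply gammaAux_succ_subset m
  apply star_gen_mem (le_refl m) hx
  rw [Nat.sub_self, gammaAux_zero]; trivial

lemma gamma_comm_mem {m : ℕ} (x : B) {y : B} (hy : y ∈ gammaAux B m) :
    x + y - x - y ∈ gammaAux B m := by
  apply gammaAux_succ_subset m
  apply comm_gen_mem (Nat.zero_le m) (by rw [gammaAux_zero]; trivial)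
  simpa using hy

lemma gamma_lam_mem {m : ℕ} (a : B) {i : B} (hi : i ∈ gammaAux B m) :
    lam a i ∈ gammaAux B m := by
  rw [lam_eq_star]
  exact gamma_add_mem (gamma_star_left a hi) hi

lemma gamma_conj_add_mem {m : ℕ} (a : B) {i : B} (hi : i ∈ gammaAux B m) :
    a + i - a ∈ gammaAux B m := by
  have h : a + i - a = (a + i - a - i) + i := by simp [sub_eq_add_neg, add_assoc]
  rw [h]
  exact gamma_add_mem (gamma_comm_mem a hi) hi

lemma gammaAux_isIdeal (m : ℕ) : IsIdeal (gammaAux B m) := by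
  refine ⟨⟨gamma_zero_mem m, fun a ha b hb => gamma_add_mem ha hb,
    fun a ha => gamma_neg_mem ha, fun a ha b hb => ?_, fun a ha => ?_⟩,
    fun a i hi => gamma_conj_add_mem a hi, fun a i hi => ?_, fun a i hi => gamma_lam_mem a hi⟩
  · rw [mul_eq_lam]
    exact gamma_add_mem ha (gamma_lam_mem a hb)
  · rw [inv_eq_star, sub_eq_add_neg]
    exact gamma_add_mem (gamma_neg_mem (gamma_star_right ha a⁻¹)) (gamma_neg_mem ha)
  · rw [conj_eq_star]
    exact gamma_conj_add_mem a
      (gamma_add_mem (gamma_lam_mem a hi) (gamma_lam_mem a (gamma_star_right hi a⁻¹)))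

/-- Lemma 2.11: each `Γ_[n](B)` is an ideal of `B` and
`Γ_[n+1](B) ⊆ Γ_[n](B)` for every positive integer `n`. -/
theorem stmt3 {B : Type*} [SkewBrace B] :
    ∀ n : ℕ, 1 ≤ n → IsIdeal (gammaBr B n) ∧ gammaBr B (n + 1) ⊆ gammaBr B n := by
  intro n hn
  refine ⟨gammaAux_isIdeal (n-1), ?_⟩
  show gammaAux B (n + 1 - 1) ⊆ gammaAux B (n - 1)
  exact gammaAux_antitone (by omega)

end SkewBrace
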